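/- arXiv:2205.03520 — 4 statements merged into one kernel-verified Lean document; each statement's English description precedes it below -/
import Mathlib

section
/- The vector \(B^j\) normal to \(F^{n-1}\) is also normal to the transformed hypersurface \(\overline{F}^{n-1}\) (i.e. \(\overline{g}_{ij}B^i_\alpha B^j = 0\) for all \(\alpha\)) if and only if \(b_j B^j = 0\), i.e. if and only if the h-vector \(b_i\) is tangent to the hypersurface. -/
/-- The vector `Bʲ` normal to `Fⁿ⁻¹` is also normal to the transformed hypersurface
(`ḡᵢⱼ Bⁱ_α Bʲ = 0` for all `α`) if and only if `bⱼBʲ = 0`, i.e. iff the h-vector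
is tangent to the hypersurface. -/
theorem normal_preserved_iff_b_tangent
    {n m : ℕ} (g : Fin n → Fin n → ℝ) (l b mm Bn : Fin n → ℝ)
    (B : Fin n → Fin m → ℝ) (v : Fin m → ℝ) (y : Fin n → ℝ)
    (L τ p p1 p2 p3 : ℝ)
    (gbar : Fin n → Fin n → ℝ)
    (hgbar : ∀ i j, gbar i j =
      p * g i j + p1 * (l i * l j) + p2 * (mm i * l j + mm j * l i) + p3 * (mm i * mm j))
    (hnorm : ∀ α, ∑ i, ∑ j, g i j * B i α * Bn j = 0)
    (hlB : ∑ i, l i * Bn i = 0)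
    (hτ0 : τ ≠ 0)
    (hm : ∀ i, mm i = b i - l i / τ)
    (hy : ∀ i, y i = ∑ α, B i α * v α)
    (hly : ∑ i, l i * y i = L)
    (hmy : ∑ i, mm i * y i = 0)
    (hL0 : L ≠ 0) (hp2 : p2 ≠ 0) :
    (∀ α, ∑ i, ∑ j, gbar i j * B i α * Bn j = 0) ↔ (∑ j, b j * Bn j = 0) := by
  -- m contracted with the normal equals b contracted with the normal
  have hmB : ∑ j, mm j * Bn j = ∑ j, b j * Bn j := by
    have : ∑ j, mm j * Bn j = ∑ j, b j * Bn j - (∑ j, l j * Bn j) / τ := by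
      simp only [hm, sub_mul, Finset.sum_sub_distrib, Finset.sum_div]
      congr 1
      exact Finset.sum_congr rfl fun j _ => by ring
    rw [this, hlB, zero_div, sub_zero]
  -- the key expansion of the transformed contraction
  have key : ∀ α, ∑ i, ∑ j, gbar i j * B i α * Bn j
      = (p2 * (∑ i, l i * B i α) + p3 * (∑ i, mm i * B i α)) * (∑ j, b j * Bn j) := by
    intro α
    have hterm : ∀ i j, gbar i j * B i α * Bn j
        = p * (g i j * B i α * Bn j)
          + p1 * ((l i * B i α) * (l j * Bn j))
          + p2 * ((mm i * B i α) * (l j * Bn j) + (l i * B i α) * (mm j * Bn j))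
          + p3 * ((mm i * B i α) * (mm j * Bn j)) := by
      intro i j; rw [hgbar]; ring
    calc ∑ i, ∑ j, gbar i j * B i α * Bn j
        = p * (∑ i, ∑ j, g i j * B i α * Bn j)
          + p1 * ((∑ i, l i * B i α) * (∑ j, l j * Bn j))
          + p2 * ((∑ i, mm i * B i α) * (∑ j, l j * Bn j)
              + (∑ i, l i * B i α) * (∑ j, mm j * Bn j))
          + p3 * ((∑ i, mm i * B i α) * (∑ j, mm j * Bn j)) := by
          simp only [hterm, mul_add, Finset.sum_add_distrib, ← Finset.mul_sum, ← Finset.sum_mul, ← Finset.sum_mul_sum]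
      _ = (p2 * (∑ i, l i * B i α) + p3 * (∑ i, mm i * B i α)) * (∑ j, b j * Bn j) := by
          rw [hnorm α, hlB, hmB]; ring
  constructor
  · intro h
    by_contra hb
    have hz : ∀ α, p2 * (∑ i, l i * B i α) + p3 * (∑ i, mm i * B i α) = 0 := by
      intro α
      have := h α
      rw [key α] at this
      exact (mul_eq_zero.mp this).resolve_right hb
    -- contract with v
    have h1 : ∑ α, (∑ i, l i * B i α) * v α = L := by
      rw [← hly]
      simp only [hy, Finset.mul_sum, Finset.sum_mul]
      rw [Finset.sum_comm]
      exact Finset.sum_congr rfl fun α _ => Finset.sum_congr rfl fun i _ => by ring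
    have h2 : ∑ α, (∑ i, mm i * B i α) * v α = 0 := by
      rw [← hmy]
      simp only [hy, Finset.mul_sum, Finset.sum_mul]
      rw [Finset.sum_comm]
      exact Finset.sum_congr rfl fun α _ => Finset.sum_congr rfl fun i _ => by ring
    have : p2 * L = 0 := by
      have : ∑ α, (p2 * (∑ i, l i * B i α) + p3 * (∑ i, mm i * B i α)) * v α = 0 := by
        simp [hz]
      simpa [add_mul, Finset.sum_add_distrib, mul_assoc, ← Finset.mul_sum, h1, h2]
        using this
    exact hL0 (by rcases mul_eq_zero.mp this with h' | h' <;> [exact absurd h' hp2; exact h'])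
  · intro hb α
    rw [key α, hb, mul_zero]
end

section
/- If the h-vector \(b_i\) is tangent to the hypersurface (\(b_jB^j = 0\)), then \(\overline{B}^i = B^i/\sqrt{p}\) is the unit normal of the transformed hypersurface: \(\overline{g}_{ij}B^i_\alpha \overline{B}^j = 0\) and \(\overline{g}_{ij}\overline{B}^i\overline{B}^j = 1\); consequently \(\overline{B}_i = \overline{g}_{ij}\overline{B}^j = \sqrt{p}\, B_i\). -/
/-!
The change `ḡ - p g` is a combination of the rank-one matrices `l ⊗ l`, `m ⊗ l`, `l ⊗ m`,
`m ⊗ m`, each of which annihilates a vector orthogonal to `l` and `m`. So `ḡ B = p (g B)` for the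
old normal `B`, and rescaling by `1/√p` gives all three claims.
-/

namespace Matrix

lemma sum_sum_mul_mul_eq_dotProduct_mulVec {ι R : Type*} [Fintype ι] [CommSemiring R]
    (A : Matrix ι ι R) (u v : ι → R) :
    ∑ i, ∑ j, A i j * u i * v j = u ⬝ᵥ A *ᵥ v := by
  simp only [dotProduct, mulVec, Finset.mul_sum]
  exact Finset.sum_congr rfl fun i _ => Finset.sum_congr rfl fun j _ => by ring

variable {ι R : Type*} [CommRing R]

def hMatsumotoChange (g : Matrix ι ι R) (l m : ι → R) (p p₁ p₂ p₃ : R) : Matrix ι ι R :=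
  p • g + p₁ • vecMulVec l l + p₂ • (vecMulVec m l + vecMulVec l m) + p₃ • vecMulVec m m

lemma hMatsumotoChange_apply (g : Matrix ι ι R) (l m : ι → R) (p p₁ p₂ p₃ : R) (i j : ι) :
    hMatsumotoChange g l m p p₁ p₂ p₃ i j =
      p * g i j + p₁ * (l i * l j) + p₂ * (m i * l j + m j * l i) + p₃ * (m i * m j) := by
  simp only [hMatsumotoChange, add_apply, smul_apply, vecMulVec_apply, smul_eq_mul]
  ring

lemma hMatsumotoChange_mulVec_of_dotProduct_eq_zero [Fintype ι] (g : Matrix ι ι R) {l m v : ι → R}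
    (p p₁ p₂ p₃ : R) (hl : l ⬝ᵥ v = 0) (hm : m ⬝ᵥ v = 0) :
    hMatsumotoChange g l m p p₁ p₂ p₃ *ᵥ v = p • g *ᵥ v := by
  simp [hMatsumotoChange, add_mulVec, smul_mulVec, vecMulVec_mulVec, hl, hm]

end Matrix

open Matrix

/-- If the h-vector is tangent to the hypersurface, then `B̄ⁱ = Bⁱ/√p` is the unit
normal of the transformed hypersurface, and `B̄ᵢ = ḡᵢⱼB̄ʲ = √p Bᵢ`. -/
theorem transformed_unit_normal
    {n m : ℕ} (g : Fin n → Fin n → ℝ) (l mm Bn : Fin n → ℝ)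
    (B : Fin n → Fin m → ℝ)
    (p p1 p2 p3 : ℝ) (hp : 0 < p)
    (gbar : Fin n → Fin n → ℝ)
    (hgbar : ∀ i j, gbar i j =
      p * g i j + p1 * (l i * l j) + p2 * (mm i * l j + mm j * l i) + p3 * (mm i * mm j))
    (hnorm : ∀ α, ∑ i, ∑ j, g i j * B i α * Bn j = 0)
    (hunit : ∑ i, ∑ j, g i j * Bn i * Bn j = 1)
    (hlB : ∑ i, l i * Bn i = 0)
    (hmB : ∑ i, mm i * Bn i = 0)
    (Bnbar : Fin n → ℝ) (hBnbar : ∀ i, Bnbar i = Bn i / Real.sqrt p)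
    (Bncov : Fin n → ℝ) (hBncov : ∀ i, Bncov i = ∑ j, g i j * Bn j) :
    (∀ α, ∑ i, ∑ j, gbar i j * B i α * Bnbar j = 0) ∧
    (∑ i, ∑ j, gbar i j * Bnbar i * Bnbar j = 1) ∧
    (∀ i, ∑ j, gbar i j * Bnbar j = Real.sqrt p * Bncov i) := by
  have hs : Real.sqrt p ≠ 0 := (Real.sqrt_pos.2 hp).ne'
  have hgbar' : gbar = hMatsumotoChange g l mm p p1 p2 p3 := by
    funext i j; exact (hgbar i j).trans (hMatsumotoChange_apply g l mm p p1 p2 p3 i j).symm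
  have hBnbar' : Bnbar = (Real.sqrt p)⁻¹ • Bn := by
    ext i; rw [hBnbar, Pi.smul_apply, smul_eq_mul, inv_mul_eq_div]
  have hcov : gbar *ᵥ Bnbar = Real.sqrt p • g *ᵥ Bn := by
    rw [hgbar', hBnbar', mulVec_smul,
      hMatsumotoChange_mulVec_of_dotProduct_eq_zero (R := ℝ) g p p1 p2 p3 hlB hmB, smul_smul]
    congr 1
    field_simp
    exact (Real.sq_sqrt hp.le).symm
  refine ⟨fun α => ?_, ?_, fun i => ?_⟩
  · have h : (B · α) ⬝ᵥ g *ᵥ Bn = 0 :=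
      (sum_sum_mul_mul_eq_dotProduct_mulVec g _ Bn).symm.trans (hnorm α)
    refine (sum_sum_mul_mul_eq_dotProduct_mulVec gbar (B · α) Bnbar).trans ?_
    rw [hcov, dotProduct_smul, h, smul_zero]
  · have h : Bn ⬝ᵥ g *ᵥ Bn = 1 := (sum_sum_mul_mul_eq_dotProduct_mulVec g Bn Bn).symm.trans hunit
    refine (sum_sum_mul_mul_eq_dotProduct_mulVec gbar Bnbar Bnbar).trans ?_
    rw [hcov, dotProduct_smul, hBnbar', smul_dotProduct, h, smul_eq_mul, smul_eq_mul, mul_one,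
      mul_inv_cancel₀ hs]
  · rw [hBncov i]
    exact congrFun hcov i
end

section
/- If the h-vector \(b_i\) is a gradient (so \(F_{ij} = \frac12(b_{i|j} - b_{j|i}) = 0\)) and tangent to the hypersurface, then the difference vector satisfies \(D^iB_i = 0\), and hence the contracted normal curvatures satisfy \(\overline{H}_0 = \sqrt{p}\,H_0\); in particular \(H_0 = 0\) if and only if \(\overline{H}_0 = 0\) (hyperplane of the first kind is preserved). -/
/-- If the h-vector is a gradient (`Fᵢⱼ = 0`) and tangent to the hypersurface, then
`DⁱBᵢ = 0`, hence `H̄₀ = √p H₀`; in particular `H₀ = 0 ↔ H̄₀ = 0`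
(hyperplane of the first kind is preserved). -/
theorem first_kind_preserved
    {n : ℕ} (ginv : Fin n → Fin n → ℝ) (l mm lup mup Bncov Bnup : Fin n → ℝ)
    (y : Fin n → ℝ) (L p p2 p3 q q1 q2 q3 E00 H0 Hbar0 : ℝ)
    (hp : 0 < p)
    (hginvsym : ∀ i j, ginv i j = ginv j i)
    (hlup : ∀ i, lup i = ∑ j, ginv i j * l j)
    (hmup : ∀ i, mup i = ∑ j, ginv i j * mm j)
    (hBnup : ∀ s, Bnup s = ∑ i, ginv s i * Bncov i)
    (hlB : ∑ s, l s * Bnup s = 0)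
    (hmB : ∑ s, mm s * Bnup s = 0)
    (bcov : Fin n → Fin n → ℝ)
    (hgrad : ∀ i j, bcov i j = bcov j i)
    (E F : Fin n → Fin n → ℝ)
    (hE : ∀ i j, E i j = (1 / 2) * (bcov i j + bcov j i))
    (hF : ∀ i j, F i j = (1 / 2) * (bcov i j - bcov j i))
    (hE00 : E00 = ∑ i, ∑ j, E i j * y i * y j)
    (Q : Fin n → ℝ) (hQ : ∀ s, Q s = p2 * l s + p3 * mm s)
    (gbarinv : Fin n → Fin n → ℝ)
    (hgbarinv : ∀ i j, gbarinv i j =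
      q * ginv i j + q1 * (lup i * lup j) + q2 * (lup i * mup j + lup j * mup i)
        + q3 * (mup i * mup j))
    (D : Fin n → ℝ)
    (hD : ∀ i, D i = (1 / 2) * ∑ s, gbarinv i s *
      (Q s * E00 + 2 * p2 * L * (∑ j, F s j * y j)))
    (hHbar0 : Hbar0 = Real.sqrt p * (H0 + ∑ i, Bncov i * D i)) :
    (∑ i, D i * Bncov i = 0) ∧
    (Hbar0 = Real.sqrt p * H0) ∧
    (H0 = 0 ↔ Hbar0 = 0) := by
  -- F vanishes
  have hF0 : ∀ i j, F i j = 0 := by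
    intro i j; rw [hF, hgrad]; ring
  -- Bncov ⋅ lup = 0
  have hBl : ∑ i, Bncov i * lup i = 0 := by
    have h : ∑ i, Bncov i * lup i = ∑ j, l j * Bnup j := by
      simp only [hlup, hBnup, Finset.mul_sum]
      rw [Finset.sum_comm]
      refine Finset.sum_congr rfl fun j _ => Finset.sum_congr rfl fun i _ => ?_
      rw [hginvsym j i]; ring
    rw [h]; exact hlB
  have hBm : ∑ i, Bncov i * mup i = 0 := by
    have h : ∑ i, Bncov i * mup i = ∑ j, mm j * Bnup j := by
      simp only [hmup, hBnup, Finset.mul_sum]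
      rw [Finset.sum_comm]
      refine Finset.sum_congr rfl fun j _ => Finset.sum_congr rfl fun i _ => ?_
      rw [hginvsym j i]; ring
    rw [h]; exact hmB
  -- Bncov ⋅ gbarinv = q * Bnup
  have hgB : ∀ s, ∑ i, Bncov i * gbarinv i s = q * Bnup s := by
    intro s
    have expand : ∀ i, Bncov i * gbarinv i s =
        q * (Bncov i * ginv i s) + (q1 * lup s) * (Bncov i * lup i)
        + (q2 * mup s) * (Bncov i * lup i) + (q2 * lup s) * (Bncov i * mup i)
        + (q3 * mup s) * (Bncov i * mup i) := by
      intro i; rw [hgbarinv]; ring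
    simp only [expand]
    rw [Finset.sum_add_distrib, Finset.sum_add_distrib, Finset.sum_add_distrib,
      Finset.sum_add_distrib, ← Finset.mul_sum, ← Finset.mul_sum, ← Finset.mul_sum,
      ← Finset.mul_sum, ← Finset.mul_sum, hBl, hBm]
    have : ∑ i, Bncov i * ginv i s = Bnup s := by
      rw [hBnup]
      exact Finset.sum_congr rfl fun i _ => by rw [hginvsym s i]; ring
    rw [this]; ring
  -- main vanishing
  have hDB : ∑ i, D i * Bncov i = 0 := by
    have hD' : ∀ i, D i = (1 / 2) * ∑ s, gbarinv i s * (Q s * E00) := by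
      intro i
      rw [hD i]
      congr 1
      refine Finset.sum_congr rfl fun s _ => ?_
      have : (∑ j, F s j * y j) = 0 := by
        refine Finset.sum_eq_zero fun j _ => ?_
        rw [hF0]; ring
      rw [this]; ring
    have step : ∑ i, D i * Bncov i
        = ∑ s, (1 / 2) * (Q s * E00) * (∑ i, Bncov i * gbarinv i s) := by
      simp only [hD', Finset.mul_sum, Finset.sum_mul]
      rw [Finset.sum_comm]
      exact Finset.sum_congr rfl fun s _ => Finset.sum_congr rfl fun i _ => by ring
    rw [step]
    have : ∀ s, (1 / 2) * (Q s * E00) * (∑ i, Bncov i * gbarinv i s)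
        = (1 / 2 * E00 * q * p2) * (l s * Bnup s)
          + (1 / 2 * E00 * q * p3) * (mm s * Bnup s) := by
      intro s; rw [hgB, hQ]; ring
    simp only [this]
    rw [Finset.sum_add_distrib, ← Finset.mul_sum, ← Finset.mul_sum, hlB, hmB]
    ring
  have hBD : ∑ i, Bncov i * D i = 0 := by
    rw [← hDB]; exact Finset.sum_congr rfl fun i _ => mul_comm _ _
  have hH : Hbar0 = Real.sqrt p * H0 := by rw [hHbar0, hBD]; ring
  refine ⟨hDB, hH, ?_⟩
  have hs : Real.sqrt p ≠ 0 := ne_of_gt (Real.sqrt_pos.mpr hp)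
  constructor
  · intro h; rw [hH, h, mul_zero]
  · intro h; rw [hH] at h; exact (mul_eq_zero.mp h).resolve_left hs
end

section
/- If the h-vector \(b_i\) is parallel with respect to the Cartan connection and tangent to the hypersurface, then the induced Berwald connection coefficients of the hypersurfaces coincide: \(\overline{G}^\alpha_{\beta\gamma} = G^\alpha_{\beta\gamma}\); in particular the hyperplane \(F^{n-1}\) of the first kind is a Berwald space if and only if \(\overline{F}^{n-1}\) is a Berwald space. -/
/-- If the h-vector is parallel with respect to the Cartan connection and tangent to
the hypersurface, then the induced Berwald connection coefficients of the hypersurfaces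
coincide: `Ḡ^α_βγ = G^α_βγ`; in particular the hyperplane of the first kind is a
Berwald space (induced coefficients depend on position only, i.e. are independent of
the supporting element `v`) iff the transformed hyperplane is a Berwald space. -/
theorem berwald_preserved
    {n m : ℕ}
    -- ambient Berwald connection coefficients, as functions of the supporting element:
    (G Gbar : (Fin m → ℝ) → Fin n → Fin n → Fin n → ℝ)
    (hGbar : ∀ v i j k, Gbar v i j k = G v i j k)
    (B : Fin n → Fin m → ℝ) (Bsecond : Fin n → Fin m → Fin m → ℝ)
    (Binv Bbarinv : (Fin m → ℝ) → Fin m → Fin n → ℝ)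
    (Bn Bncov : (Fin m → ℝ) → Fin n → ℝ)
    (A Abar : (Fin m → ℝ) → Fin n → Fin m → Fin m → ℝ)
    (hA : ∀ v i β γ, A v i β γ =
      Bsecond i β γ + ∑ j, ∑ k, G v i j k * B j β * B k γ)
    (hAbar : ∀ v i β γ, Abar v i β γ =
      Bsecond i β γ + ∑ j, ∑ k, Gbar v i j k * B j β * B k γ)
    (Gind Gbarind : (Fin m → ℝ) → Fin m → Fin m → Fin m → ℝ)
    -- induced Berwald coefficients for a hyperplane of the first kind:
    (hGind : ∀ v α β γ, Gind v α β γ = ∑ i, Binv v α i * A v i β γ)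
    (hGbarind : ∀ v α β γ, Gbarind v α β γ = ∑ i, Bbarinv v α i * Abar v i β γ)
    -- completeness relation `Aⁱ_βγ = Bⁱ_δ G^δ_βγ + BⁱB_h A^h_βγ`:
    (hcomp : ∀ v i β γ, A v i β γ =
      (∑ δ, B i δ * Gind v δ β γ) + Bn v i * ∑ h, Bncov v h * A v h β γ)
    (hBbar1 : ∀ v α δ, ∑ i, Bbarinv v α i * B i δ = if α = δ then (1:ℝ) else 0)
    (hBbar2 : ∀ v α, ∑ i, Bbarinv v α i * Bn v i = 0) :
    (∀ v α β γ, Gbarind v α β γ = Gind v α β γ) ∧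
    ((∀ v w α β γ, Gind v α β γ = Gind w α β γ) ↔
      (∀ v w α β γ, Gbarind v α β γ = Gbarind w α β γ)) := by

  have main : ∀ v α β γ, Gbarind v α β γ = Gind v α β γ := by
    intro v α β γ
    have hAeq : ∀ i, Abar v i β γ = A v i β γ := by
      intro i; rw [hAbar, hA]; simp [hGbar]
    calc Gbarind v α β γ = ∑ i, Bbarinv v α i * A v i β γ := by
          rw [hGbarind]; exact Finset.sum_congr rfl fun i _ => by rw [hAeq]
      _ = ∑ i, Bbarinv v α i *
            ((∑ δ, B i δ * Gind v δ β γ) + Bn v i * ∑ h, Bncov v h * A v h β γ) := by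
          exact Finset.sum_congr rfl fun i _ => by rw [← hcomp]
      _ = (∑ δ, (∑ i, Bbarinv v α i * B i δ) * Gind v δ β γ) +
            (∑ i, Bbarinv v α i * Bn v i) * ∑ h, Bncov v h * A v h β γ := by
          simp only [mul_add, Finset.sum_add_distrib, Finset.mul_sum, Finset.sum_mul]
          congr 1
          · rw [Finset.sum_comm]
            exact Finset.sum_congr rfl fun δ _ => Finset.sum_congr rfl fun i _ => by ring
          · rw [Finset.sum_comm]
            exact Finset.sum_congr rfl fun h _ => Finset.sum_congr rfl fun i _ => by ring
      _ = Gind v α β γ := by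
          rw [hBbar2]
          simp [hBbar1]
  exact ⟨main, ⟨fun h v w α β γ => by rw [main, main, h],
    fun h v w α β γ => by rw [← main, ← main, h]⟩⟩
end
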